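/- Second-order Taylor decomposition of the logistic negative log-likelihood with cubic remainder bound. Fix n ≥ 1, data x_1, …, x_n ∈ ℝ^p and a_1, …, a_n ∈ {0,1}, and vectors α*, b ∈ ℝ^p. Then ℓ_n(α* + b/√n) − ℓ_n(α*) = −Σ_{i=1}^n (a_i − φ'(x_iᵀα*)) (x_iᵀb)/√n + (1/(2n)) Σ_{i=1}^n φ''(x_iᵀα*)(x_iᵀb)² + R_n, where the remainder satisfies |R_n| ≤ (√3/108) n^{−3/2} Σ_{i=1}^n |x_iᵀb|³. -/

import Mathlib

open Filter
open scoped RealInnerProductSpace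

/-- The logistic log-partition function `φ(t) = log(1 + exp t)`. -/
noncomputable def phi (t : ℝ) : ℝ := Real.log (1 + Real.exp t)

/-- `φ'(t) = exp t / (1 + exp t)`. -/
noncomputable def phiD1 (t : ℝ) : ℝ := Real.exp t / (1 + Real.exp t)

/-- `φ''(t) = exp t / (1 + exp t)^2`. -/
noncomputable def phiD2 (t : ℝ) : ℝ := Real.exp t / (1 + Real.exp t) ^ 2

/-- The logistic negative log-likelihood
`ℓ_n(α) = ∑ i, [−a_i (x_iᵀα) + φ(x_iᵀα)]`. -/
noncomputable def negLogLik {p n : ℕ} (x : Fin n → EuclideanSpace ℝ (Fin p))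
    (a : Fin n → ℝ) (α : EuclideanSpace ℝ (Fin p)) : ℝ :=
  ∑ i, (-(a i) * ⟪x i, α⟫ + phi ⟪x i, α⟫)

/-!
Each summand of `ℓ_n` is linear in `x_iᵀα` plus `φ(x_iᵀα)`, so the difference is
the sum over `i` of second-order Taylor expansions of `φ` at `x_iᵀα*` with increment
`x_iᵀb / √n`. Their Lagrange remainders are at most `(√3/18)/6 · |h|³`, because with
`u = exp t` one has `φ''' = u(1 - u)/(1 + u)³`, whose extreme values `±√3/18` are
taken at `u = 2 ∓ √3`.
-/

theorem abs_taylor_remainder_two_le {f : ℝ → ℝ} {C : ℝ} (hf : ContDiff ℝ 3 f)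
    (hC : ∀ y, |iteratedDeriv 3 f y| ≤ C) (t h : ℝ) :
    |f (t + h) - f t - deriv f t * h - iteratedDeriv 2 f t * h ^ 2 / 2| ≤ C / 6 * |h| ^ 3 := by
  rcases eq_or_ne h 0 with rfl | hh
  · simp
  have hne : t ≠ t + h := by simpa using hh
  obtain ⟨y, -, hy⟩ :=
    taylor_mean_remainder_lagrange_iteratedDeriv (n := 2) hne hf.contDiffOn
  have hs : UniqueDiffOn ℝ (Set.uIcc t (t + h)) := uniqueDiffOn_uIcc hne
  have hderiv (k : ℕ) (hk : k ≤ 3) :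
      iteratedDerivWithin k f (Set.uIcc t (t + h)) t = iteratedDeriv k f t :=
    iteratedDerivWithin_eq_iteratedDeriv hs (hf.contDiffAt.of_le (by exact_mod_cast hk))
      Set.left_mem_uIcc
  simp only [taylor_within_apply, Finset.sum_range_succ, Finset.sum_range_zero,
    hderiv 0 (by norm_num), hderiv 1 (by norm_num), hderiv 2 (by norm_num),
    iteratedDeriv_zero, iteratedDeriv_one, add_sub_cancel_left, smul_eq_mul] at hy
  calc |f (t + h) - f t - deriv f t * h - iteratedDeriv 2 f t * h ^ 2 / 2|
      = |iteratedDeriv 3 f y| / 6 * |h| ^ 3 := by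
        rw [show f (t + h) - f t - deriv f t * h - iteratedDeriv 2 f t * h ^ 2 / 2
          = iteratedDeriv 3 f y * h ^ 3 / 6 by linear_combination hy]
        rw [abs_div, abs_mul, abs_pow, abs_of_pos (by norm_num : (0:ℝ) < 6)]
        ring
    _ ≤ C / 6 * |h| ^ 3 := by gcongr; exact hC y

noncomputable def phiD3 (t : ℝ) : ℝ := Real.exp t * (1 - Real.exp t) / (1 + Real.exp t) ^ 3

theorem contDiff_phi {k : WithTop ℕ∞} : ContDiff ℝ k phi :=
  (contDiff_const.add Real.contDiff_exp).log fun t => by positivity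

theorem hasDerivAt_phi (t : ℝ) : HasDerivAt phi (phiD1 t) t :=
  ((Real.hasDerivAt_exp t).const_add 1).log (by positivity)

theorem hasDerivAt_phiD1 (t : ℝ) : HasDerivAt phiD1 (phiD2 t) t :=
  ((Real.hasDerivAt_exp t).div ((Real.hasDerivAt_exp t).const_add 1)
    (by positivity)).congr_deriv (by rw [phiD2]; field_simp; ring)

theorem hasDerivAt_phiD2 (t : ℝ) : HasDerivAt phiD2 (phiD3 t) t :=
  ((Real.hasDerivAt_exp t).div (((Real.hasDerivAt_exp t).const_add 1).fun_pow 2)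
    (by positivity)).congr_deriv (by rw [phiD3]; field_simp; ring)

theorem iteratedDeriv_two_phi : iteratedDeriv 2 phi = phiD2 := by
  rw [iteratedDeriv_succ, iteratedDeriv_one, funext fun t => (hasDerivAt_phi t).deriv]
  exact funext fun t => (hasDerivAt_phiD1 t).deriv

theorem iteratedDeriv_three_phi : iteratedDeriv 3 phi = phiD3 := by
  rw [iteratedDeriv_succ, iteratedDeriv_two_phi]
  exact funext fun t => (hasDerivAt_phiD2 t).deriv

theorem abs_phiD3_le (t : ℝ) : |phiD3 t| ≤ Real.sqrt 3 / 18 := by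
  have hu : 0 < Real.exp t := Real.exp_pos t
  rw [phiD3]
  generalize Real.exp t = u at hu ⊢
  rw [abs_div, abs_of_pos (by positivity : (0:ℝ) < (1 + u) ^ 3),
    div_le_div_iff₀ (by positivity) (by norm_num)]
  -- `18²·u²(1-u)² ≤ 3(1+u)⁶` is `(u² - 4u + 1)²(u² + 14u + 1) ≥ 0` after expansion.
  have key : (u * (1 - u) * 18) ^ 2 ≤ (Real.sqrt 3 * (1 + u) ^ 3) ^ 2 := by
    rw [mul_pow (Real.sqrt 3), Real.sq_sqrt (by norm_num)]
    nlinarith [mul_nonneg (sq_nonneg (u ^ 2 - 4 * u + 1))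
      (by positivity : (0:ℝ) ≤ u ^ 2 + 14 * u + 1)]
  simpa [abs_mul, abs_of_pos hu] using abs_le_of_sq_le_sq key (by positivity)

noncomputable def phiTaylorRemainder (t h : ℝ) : ℝ :=
  phi (t + h) - phi t - phiD1 t * h - phiD2 t * h ^ 2 / 2

theorem abs_phiTaylorRemainder_le (t h : ℝ) :
    |phiTaylorRemainder t h| ≤ Real.sqrt 3 / 108 * |h| ^ 3 := by
  have h3 : ∀ y, |iteratedDeriv 3 phi y| ≤ Real.sqrt 3 / 18 := by
    simpa only [iteratedDeriv_three_phi] using abs_phiD3_le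
  have := abs_taylor_remainder_two_le contDiff_phi h3 t h
  rwa [funext fun t => (hasDerivAt_phi t).deriv, iteratedDeriv_two_phi,
    div_div, show (18 : ℝ) * 6 = 108 by norm_num] at this

theorem negLogLik_taylor_expansion_cubic_remainder_general
    {p n : ℕ}
    (x : Fin n → EuclideanSpace ℝ (Fin p)) (a : Fin n → ℝ)
    (αstar b : EuclideanSpace ℝ (Fin p)) :
    ∃ R : ℝ,
      negLogLik x a (αstar + (Real.sqrt n)⁻¹ • b) - negLogLik x a αstar =
        -(∑ i, (a i - phiD1 ⟪x i, αstar⟫) * ⟪x i, b⟫ / Real.sqrt n)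
        + (1 / (2 * (n : ℝ))) * ∑ i, phiD2 ⟪x i, αstar⟫ * ⟪x i, b⟫ ^ 2
        + R ∧
      |R| ≤ (Real.sqrt 3 / 108) * ((n : ℝ) ^ ((3 : ℝ) / 2))⁻¹
        * ∑ i, |⟪x i, b⟫| ^ 3 := by
  set σ := (Real.sqrt n)⁻¹ with hσ
  refine ⟨∑ i, phiTaylorRemainder ⟪x i, αstar⟫ (σ * ⟪x i, b⟫), ?_, ?_⟩
  · have hσ2 : σ ^ 2 = (n : ℝ)⁻¹ := by rw [hσ, inv_pow, Real.sq_sqrt n.cast_nonneg]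
    simp only [negLogLik, phiTaylorRemainder, inner_add_right, real_inner_smul_right,
      ← Finset.sum_sub_distrib, ← Finset.sum_neg_distrib, Finset.mul_sum,
      ← Finset.sum_add_distrib]
    refine Finset.sum_congr rfl fun i _ => ?_
    rw [div_eq_mul_inv _ (Real.sqrt n), ← hσ]
    linear_combination (phiD2 ⟪x i, αstar⟫ * ⟪x i, b⟫ ^ 2 / 2) * hσ2
  · have hσ0 : 0 ≤ σ := by positivity
    have hσ3 : ((n : ℝ) ^ ((3 : ℝ) / 2))⁻¹ = σ ^ 3 := by
      rw [Real.rpow_div_two_eq_sqrt _ n.cast_nonneg, Real.rpow_ofNat, hσ, inv_pow]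
    rw [hσ3]
    calc |∑ i, phiTaylorRemainder ⟪x i, αstar⟫ (σ * ⟪x i, b⟫)|
        ≤ ∑ i, |phiTaylorRemainder ⟪x i, αstar⟫ (σ * ⟪x i, b⟫)| :=
          Finset.abs_sum_le_sum_abs _ _
      _ ≤ ∑ i, Real.sqrt 3 / 108 * |σ * ⟪x i, b⟫| ^ 3 :=
          Finset.sum_le_sum fun i _ => abs_phiTaylorRemainder_le _ _
      _ = Real.sqrt 3 / 108 * σ ^ 3 * ∑ i, |⟪x i, b⟫| ^ 3 := by
          simp only [abs_mul, abs_of_nonneg hσ0, mul_pow, Finset.mul_sum, mul_assoc]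

/-- Second-order Taylor decomposition of the logistic negative log-likelihood
with cubic remainder bound (constant `√3/108`). -/
theorem negLogLik_taylor_expansion_cubic_remainder
    {p n : ℕ} (hn : 1 ≤ n)
    (x : Fin n → EuclideanSpace ℝ (Fin p)) (a : Fin n → ℝ)
    (ha : ∀ i, a i = 0 ∨ a i = 1)
    (αstar b : EuclideanSpace ℝ (Fin p)) :
    ∃ R : ℝ,
      negLogLik x a (αstar + (Real.sqrt n)⁻¹ • b) - negLogLik x a αstar =
        -(∑ i, (a i - phiD1 ⟪x i, αstar⟫) * ⟪x i, b⟫ / Real.sqrt n)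
        + (1 / (2 * (n : ℝ))) * ∑ i, phiD2 ⟪x i, αstar⟫ * ⟪x i, b⟫ ^ 2
        + R ∧
      |R| ≤ (Real.sqrt 3 / 108) * ((n : ℝ) ^ ((3 : ℝ) / 2))⁻¹
        * ∑ i, |⟪x i, b⟫| ^ 3 :=
  negLogLik_taylor_expansion_cubic_remainder_general x a αstar b
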